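/- arXiv:2302.13204 — 2 statements merged into one kernel-verified Lean document; each statement's English description precedes it below -/
import Mathlib

section
/- Assume γ = t_m. Let e_1, …, e_n be the standard basis of ℂⁿ and define ẽ_j = (i e_j + e_{n+1−j})/√2 for j = 1, …, m. Then ẽ_1, …, ẽ_m are orthonormal, and H ẽ_1 = Re(z_1) ẽ_1 + t_1 ẽ_2, H ẽ_j = t_{j−1} ẽ_{j−1} + Re(z_j) ẽ_j + t_j ẽ_{j+1} for 2 ≤ j ≤ m−1, and H ẽ_m = t_{m−1} ẽ_{m−1} + Δ ẽ_m. Consequently the span K of ẽ_1, …, ẽ_m is an invariant subspace of H, and the matrix of the restriction of H to K in the basis (ẽ_1, …, ẽ_m) is the real symmetric tridiagonal matrix with diagonal entries (Re z_1, …, Re z_{m−1}, Δ) and off-diagonal entries t_1, …, t_{m−1}. -/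
open Matrix Complex

/-- The `2m × 2m` tridiagonal Hamiltonian with diagonal entries `z 1, …, z n`
(1-based) and symmetric off-diagonal entries `t 1, …, t (n-1)`. -/
noncomputable def Hop (m : ℕ) (t : ℕ → ℝ) (z : ℕ → ℂ) :
    Matrix (Fin (2*m)) (Fin (2*m)) ℂ :=
  fun i j =>
    if (i : ℕ) = (j : ℕ) then z ((i : ℕ) + 1)
    else if (i : ℕ) + 1 = (j : ℕ) then ((t ((i : ℕ) + 1) : ℝ) : ℂ)
    else if (j : ℕ) + 1 = (i : ℕ) then ((t ((j : ℕ) + 1) : ℝ) : ℂ)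
    else 0

/-- The block matrix `M(Z) = [[1, (conj Z / t_m) P_m],[(Z / t_m) P_m, 1]]`. -/
noncomputable def Mop (m : ℕ) (t : ℕ → ℝ) (Z : ℂ) :
    Matrix (Fin (2*m)) (Fin (2*m)) ℂ :=
  fun i j =>
    if i = j then 1
    else if (i : ℕ) + (j : ℕ) + 1 = 2*m then
      (if (i : ℕ) < m then (starRingEnd ℂ) Z / (t m : ℂ) else Z / (t m : ℂ))
    else 0

/-- The vectors `ẽ_j = (i e_j + e_{n+1−j})/√2`, `j = 1, …, m` (0-based index). -/
noncomputable def etil (m : ℕ) (j : Fin m) : Fin (2*m) → ℂ :=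
  fun k =>
    (Complex.I * (if (k : ℕ) = (j : ℕ) then 1 else 0) +
      (if (k : ℕ) + (j : ℕ) + 1 = 2*m then 1 else 0)) / ((Real.sqrt 2 : ℝ) : ℂ)

/-- The real symmetric tridiagonal matrix with diagonal
`(Re z_1, …, Re z_{m−1}, Δ)` and off-diagonal entries `t_1, …, t_{m−1}`. -/
noncomputable def Ttri (m : ℕ) (t : ℕ → ℝ) (z : ℕ → ℂ) : Matrix (Fin m) (Fin m) ℝ :=
  fun i j =>
    if (i : ℕ) = (j : ℕ) then (z ((i : ℕ) + 1)).re
    else if (i : ℕ) + 1 = (j : ℕ) then t ((i : ℕ) + 1)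
    else if (j : ℕ) + 1 = (i : ℕ) then t ((j : ℕ) + 1)
    else 0

/-!
Index `Fin (2 * m)` by its two halves `i` and `Fin.rev i` (`= 2m - 1 - i`) for `i : Fin m`, so
that `ẽ_j = (I e_j + e_(rev j)) / √2`. The top-left `m × m` block of `H` is `T` with `Δ + I t_m`
in place of `Δ`, and the top-right block has the single nonzero entry `H (m-1) (rev (m-1)) = t_m`.
In the first `m` coordinates of `√2 H ẽ_(m-1)` these two corrections contribute
`I * (I t_m) + t_m = 0`, so `H ẽ_j` agrees there with `∑ₖ T j k ẽ_k`. The symmetry hypotheses say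
`H (rev p) (rev q) = conj (H p q)`, which carries the agreement over to the last `m` coordinates.
-/

open ComplexConjugate

section

variable {m : ℕ}

abbrev Fin.castTwoMul (i : Fin m) : Fin (2 * m) := Fin.castLE (by omega) i

@[simp] theorem Fin.val_castTwoMul (i : Fin m) : (i.castTwoMul : ℕ) = i := rfl

theorem Fin.exists_castTwoMul_or_rev (p : Fin (2 * m)) :
    ∃ i : Fin m, p = i.castTwoMul ∨ p = i.castTwoMul.rev := by
  by_cases hp : (p : ℕ) < m
  · exact ⟨⟨p, hp⟩, .inl rfl⟩
  · refine ⟨⟨2 * m - (p + 1), by omega⟩, .inr (Fin.ext ?_)⟩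
    simp only [Fin.castLE_mk, Fin.val_rev]
    omega

theorem etil_eq (j : Fin m) :
    etil m j = ((√2 : ℝ) : ℂ)⁻¹ •
      (I • Pi.single j.castTwoMul 1 + Pi.single j.castTwoMul.rev 1) := by
  funext k
  have hrev : (k : ℕ) + j + 1 = 2 * m ↔ (k : ℕ) = 2 * m - (j + 1) := by omega
  simp only [etil, Pi.smul_apply, Pi.add_apply, Pi.single_apply, Fin.ext_iff, Fin.val_rev,
    Fin.val_castTwoMul, hrev]
  simp [div_eq_inv_mul]

theorem ofReal_sqrt_two_inv_mul_self : ((√2 : ℝ) : ℂ)⁻¹ * ((√2 : ℝ) : ℂ)⁻¹ = 2⁻¹ := by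
  rw [← mul_inv, ← ofReal_mul, Real.mul_self_sqrt zero_le_two, ofReal_ofNat]

theorem etil_dotProduct (j k : Fin m) :
    star (etil m j) ⬝ᵥ etil m k = if j = k then 1 else 0 := by
  have hjk : (k : ℕ) ≠ 2 * m - (j + 1) := by omega
  have hkj : 2 * m - (k + 1) ≠ (j : ℕ) := by omega
  rcases eq_or_ne j k with rfl | hne
  · simp only [etil_eq, smul_add, star_add, star_smul, star_inv₀, RCLike.star_def, conj_ofReal,
      conj_I, Pi.star_single, star_one, neg_smul, smul_neg, dotProduct_add, dotProduct_smul,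
      dotProduct_single, Pi.add_apply, Pi.neg_apply, Pi.smul_apply, Pi.single_eq_same, smul_eq_mul,
      mul_one, ne_eq, Fin.ext_iff, Fin.val_castLE, Fin.val_rev, hjk, not_false_eq_true,
      Pi.single_eq_of_ne, mul_zero, add_zero, mul_neg, hkj, neg_zero, zero_add, ↓reduceIte]
    linear_combination (1 - I * I) * ofReal_sqrt_two_inv_mul_self - 2⁻¹ * I_mul_I
  · have hrev : 2 * m - (k + 1) ≠ 2 * m - (j + 1) := by omega
    simp [etil_eq, dotProduct_add, Fin.ext_iff, hjk, hkj, hrev, hne, Fin.val_ne_of_ne hne.symm]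

theorem mulVec_etil_apply (M : Matrix (Fin (2 * m)) (Fin (2 * m)) ℂ) (j : Fin m) (p : Fin (2 * m)) :
    (M *ᵥ etil m j) p = ((√2 : ℝ) : ℂ)⁻¹ * (I * M p j.castTwoMul + M p j.castTwoMul.rev) := by
  simp only [etil_eq, smul_add, mulVec_add, mulVec_smul, mulVec_single, MulOpposite.op_one,
    one_smul, Pi.add_apply, Pi.smul_apply, col_apply, smul_eq_mul]
  ring

theorem sum_smul_etil_apply_castTwoMul (x : Fin m → ℂ) (i : Fin m) :
    (∑ k, x k • etil m k) i.castTwoMul = ((√2 : ℝ) : ℂ)⁻¹ * (I * x i) := by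
  have hrev : ∀ k : Fin m, (i : ℕ) ≠ 2 * m - (k + 1) := by omega
  simp only [etil_eq, smul_add, Finset.sum_apply, Pi.add_apply, Pi.smul_apply, Pi.single_apply,
    Fin.ext_iff, Fin.val_castLE, smul_eq_mul, mul_ite, mul_one, mul_zero, Fin.val_rev, hrev,
    if_false, add_zero]
  simp only [Fin.val_inj, Fintype.sum_ite_eq]
  ring

theorem sum_smul_etil_apply_rev (x : Fin m → ℂ) (i : Fin m) :
    (∑ k, x k • etil m k) i.castTwoMul.rev = ((√2 : ℝ) : ℂ)⁻¹ * x i := by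
  have hlo : ∀ k : Fin m, 2 * m - (i + 1) ≠ (k : ℕ) := by omega
  have hrev : ∀ k : Fin m, 2 * m - (i + 1) = 2 * m - (k + 1) ↔ i = k := by
    intro k; rw [← Fin.val_inj]; omega
  simp only [etil_eq, smul_add, Finset.sum_apply, Pi.add_apply, Pi.smul_apply, Pi.single_apply,
    Fin.ext_iff, Fin.val_castLE, smul_eq_mul, mul_ite, mul_one, mul_zero, Fin.val_rev, hlo, hrev,
    if_false, zero_add]
  simp only [Fin.val_inj, Fintype.sum_ite_eq]
  ring

theorem Hop_rev_rev {t : ℕ → ℝ} {z : ℕ → ℂ}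
    (htsym : ∀ j, 1 ≤ j → j ≤ 2 * m - 1 → t j = t (2 * m - j))
    (hzsym : ∀ j, 1 ≤ j → j ≤ 2 * m → z (2 * m + 1 - j) = conj (z j))
    (p q : Fin (2 * m)) : Hop m t z p.rev q.rev = conj (Hop m t z p q) := by
  have hp := p.isLt
  have hq := q.isLt
  simp only [Hop, Fin.val_rev]
  split_ifs <;> try omega
  · rw [show 2 * m - (p + 1) + 1 = 2 * m + 1 - (p + 1) by omega, hzsym _ (by omega) (by omega)]
  · rw [conj_ofReal, ofReal_inj, htsym _ (by omega) (by omega)]; congr 1; omega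
  · rw [conj_ofReal, ofReal_inj, htsym _ (by omega) (by omega)]; congr 1; omega
  · simp

theorem Hop_castTwoMul_castTwoMul_rev (t : ℕ → ℝ) (z : ℕ → ℂ) (i a : Fin m) :
    Hop m t z i.castTwoMul a.castTwoMul.rev =
      if (i : ℕ) + 1 = m ∧ (a : ℕ) + 1 = m then (t m : ℂ) else 0 := by
  have h₁ : (i : ℕ) ≠ 2 * m - (a + 1) := by omega
  have h₂ : 2 * m - (a + 1) + 1 ≠ i := by omega
  have h₃ : (i : ℕ) + 1 = 2 * m - (a + 1) ↔ (i : ℕ) + 1 = m ∧ (a : ℕ) + 1 = m := by omega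
  dsimp only [Hop, Fin.val_rev, Fin.val_castTwoMul]
  simp only [h₁, h₂, h₃, if_false]
  split_ifs with h
  · rw [h.1]
  · rfl

theorem Hop_castTwoMul_castTwoMul {t : ℕ → ℝ} {z : ℕ → ℂ}
    (hzreal : ∀ j, 1 ≤ j → j < m → (z j).im = 0) (hγ : (z m).im = t m) (i a : Fin m) :
    Hop m t z i.castTwoMul a.castTwoMul =
      Ttri m t z a i + if (i : ℕ) + 1 = m ∧ (a : ℕ) + 1 = m then t m * I else 0 := by
  by_cases hia : i = a
  · subst hia
    by_cases hlast : (i : ℕ) + 1 = m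
    · simp [Hop, Ttri, hlast, ← hγ]
    · dsimp only [Hop, Ttri, Fin.val_castTwoMul]
      simp only [if_true, hlast, false_and, if_false, add_zero]
      apply Complex.ext <;> simp [hzreal (i + 1) (by omega) (by omega)]
  · have hia' : (i : ℕ) ≠ a := Fin.val_ne_of_ne hia
    have hlast : ¬((i : ℕ) + 1 = m ∧ (a : ℕ) + 1 = m) := by omega
    dsimp only [Hop, Ttri, Fin.val_castTwoMul]
    simp only [hia', hia'.symm, hlast, if_false, add_zero]
    split_ifs <;> first | omega | simp

theorem I_mul_Hop_add_Hop_rev {t : ℕ → ℝ} {z : ℕ → ℂ}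
    (hzreal : ∀ j, 1 ≤ j → j < m → (z j).im = 0) (hγ : (z m).im = t m) (i a : Fin m) :
    I * Hop m t z i.castTwoMul a.castTwoMul + Hop m t z i.castTwoMul a.castTwoMul.rev =
      I * Ttri m t z a i := by
  rw [Hop_castTwoMul_castTwoMul hzreal hγ, Hop_castTwoMul_castTwoMul_rev]
  split_ifs
  · linear_combination t m * I_mul_I
  · ring

theorem Hop_mulVec_etil {t : ℕ → ℝ} {z : ℕ → ℂ}
    (htsym : ∀ j, 1 ≤ j → j ≤ 2 * m - 1 → t j = t (2 * m - j))
    (hzsym : ∀ j, 1 ≤ j → j ≤ 2 * m → z (2 * m + 1 - j) = conj (z j))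
    (hzreal : ∀ j, 1 ≤ j → j < m → (z j).im = 0) (hγ : (z m).im = t m) (j : Fin m) :
    Hop m t z *ᵥ etil m j = ∑ k, ((Ttri m t z j k : ℝ) : ℂ) • etil m k := by
  funext p
  obtain ⟨i, rfl | rfl⟩ := Fin.exists_castTwoMul_or_rev p
  · rw [mulVec_etil_apply, sum_smul_etil_apply_castTwoMul, I_mul_Hop_add_Hop_rev hzreal hγ]
  · have hlo := Hop_rev_rev htsym hzsym i.castTwoMul j.castTwoMul.rev
    rw [Fin.rev_rev] at hlo
    have key := congrArg conj (I_mul_Hop_add_Hop_rev hzreal hγ i j)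
    simp only [map_add, map_mul, conj_I, conj_ofReal] at key
    rw [mulVec_etil_apply, sum_smul_etil_apply_rev, hlo, Hop_rev_rev htsym hzsym]
    congr 1
    linear_combination I * key +
      (conj (Hop m t z i.castTwoMul j.castTwoMul) - Ttri m t z j i) * I_mul_I

section Rows

variable {M : Type*} [AddCommMonoid M] [Module ℂ M] (t : ℕ → ℝ) (z : ℕ → ℂ) (v : Fin m → M)

theorem sum_Ttri_smul_eq_sum_of_mem (a : Fin m) {S : Finset (Fin m)}
    (hS : ∀ k : Fin m, (k : ℕ) + 1 = a ∨ (k : ℕ) = a ∨ (a : ℕ) + 1 = k → k ∈ S) :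
    ∑ k, ((Ttri m t z a k : ℝ) : ℂ) • v k = ∑ k ∈ S, ((Ttri m t z a k : ℝ) : ℂ) • v k := by
  refine (Finset.sum_subset (Finset.subset_univ S) fun k _ hk => ?_).symm
  have hne := mt (hS k) hk
  simp only [Ttri]
  rw [if_neg (by omega), if_neg (by omega), if_neg (by omega), ofReal_zero, zero_smul]

theorem sum_Ttri_first_row_smul (hm : 1 < m) :
    ∑ k, ((Ttri m t z ⟨0, by omega⟩ k : ℝ) : ℂ) • v k =
      (((z 1).re : ℝ) : ℂ) • v ⟨0, by omega⟩ + ((t 1 : ℝ) : ℂ) • v ⟨1, hm⟩ := by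
  rw [sum_Ttri_smul_eq_sum_of_mem (S := {⟨0, by omega⟩, ⟨1, hm⟩}) _ _ _ _
      (by intro k; simp only [Finset.mem_insert, Finset.mem_singleton, Fin.ext_iff]; omega),
    Finset.sum_pair (by simp only [ne_eq, Fin.ext_iff]; omega)]
  simp [Ttri]

theorem sum_Ttri_interior_row_smul {j : ℕ} (hj₁ : 2 ≤ j) (hj₂ : j < m) :
    ∑ k, ((Ttri m t z ⟨j - 1, by omega⟩ k : ℝ) : ℂ) • v k =
      ((t (j - 1) : ℝ) : ℂ) • v ⟨j - 2, by omega⟩ + (((z j).re : ℝ) : ℂ) • v ⟨j - 1, by omega⟩ +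
        ((t j : ℝ) : ℂ) • v ⟨j, by omega⟩ := by
  rw [sum_Ttri_smul_eq_sum_of_mem (S := {⟨j - 2, by omega⟩, ⟨j - 1, by omega⟩, ⟨j, by omega⟩})
      _ _ _ _ (by intro k; simp only [Finset.mem_insert, Finset.mem_singleton, Fin.ext_iff]; omega),
    Finset.sum_insert (by simp only [Finset.mem_insert, Finset.mem_singleton, Fin.ext_iff]; omega),
    Finset.sum_pair (by simp only [ne_eq, Fin.ext_iff]; omega)]
  have h₁ : j - 1 + 1 = j := by omega
  have h₂ : j - 2 + 1 = j - 1 := by omega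
  simp [Ttri, h₁, h₂, show j - 1 ≠ j - 2 by omega, show j ≠ j - 2 by omega,
    show j - 1 ≠ j by omega, add_assoc]

theorem sum_Ttri_last_row_smul (hm : 1 < m) :
    ∑ k, ((Ttri m t z ⟨m - 1, by omega⟩ k : ℝ) : ℂ) • v k =
      ((t (m - 1) : ℝ) : ℂ) • v ⟨m - 2, by omega⟩ + (((z m).re : ℝ) : ℂ) • v ⟨m - 1, by omega⟩ := by
  rw [sum_Ttri_smul_eq_sum_of_mem (S := {⟨m - 2, by omega⟩, ⟨m - 1, by omega⟩}) _ _ _ _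
      (by intro k; simp only [Finset.mem_insert, Finset.mem_singleton, Fin.ext_iff]; omega),
    Finset.sum_pair (by simp only [ne_eq, Fin.ext_iff]; omega)]
  have h₁ : m - 1 + 1 = m := by omega
  have h₂ : m - 2 + 1 = m - 1 := by omega
  simp [Ttri, h₁, h₂, show m - 1 ≠ m - 2 by omega, show m ≠ m - 2 by omega]

end Rows

end

theorem stmt9 (m : ℕ) (t : ℕ → ℝ) (z : ℕ → ℂ)
    (htsym : ∀ j, 1 ≤ j → j ≤ 2*m - 1 → t j = t (2*m - j))
    (hzreal : ∀ j, 1 ≤ j → j ≤ 2*m → j ≠ m → j ≠ m + 1 → (z j).im = 0)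
    (hzsym : ∀ j, 1 ≤ j → j ≤ 2*m → z (2*m + 1 - j) = (starRingEnd ℂ) (z j))
    (hγ_eq : (z m).im = t m) :
    (∀ j k : Fin m, star (etil m j) ⬝ᵥ etil m k = if j = k then 1 else 0) ∧
    (∀ _h2 : 2 ≤ m,
      (Hop m t z).mulVec (etil m ⟨0, by omega⟩) =
        (((z 1).re : ℝ) : ℂ) • etil m ⟨0, by omega⟩ + ((t 1 : ℝ) : ℂ) • etil m ⟨1, by omega⟩) ∧
    (∀ j : ℕ, ∀ (_hj1 : 2 ≤ j) (_hj2 : j ≤ m - 1),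
      (Hop m t z).mulVec (etil m ⟨j - 1, by omega⟩) =
        ((t (j - 1) : ℝ) : ℂ) • etil m ⟨j - 2, by omega⟩ +
          (((z j).re : ℝ) : ℂ) • etil m ⟨j - 1, by omega⟩ +
          ((t j : ℝ) : ℂ) • etil m ⟨j, by omega⟩) ∧
    (∀ _h2 : 2 ≤ m,
      (Hop m t z).mulVec (etil m ⟨m - 1, by omega⟩) =
        ((t (m - 1) : ℝ) : ℂ) • etil m ⟨m - 2, by omega⟩ +
          (((z m).re : ℝ) : ℂ) • etil m ⟨m - 1, by omega⟩) ∧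
    (∀ j : Fin m, (Hop m t z).mulVec (etil m j) =
      ∑ k : Fin m, ((Ttri m t z j k : ℝ) : ℂ) • etil m k) ∧
    (∀ v ∈ Submodule.span ℂ (Set.range (etil m)),
      (Hop m t z).mulVec v ∈ Submodule.span ℂ (Set.range (etil m))) := by
  have hmul := Hop_mulVec_etil htsym hzsym
    (fun j h₁ h₂ => hzreal j h₁ (by omega) (by omega) (by omega)) hγ_eq
  refine ⟨etil_dotProduct, fun h2 => ?_, fun j hj₁ hj₂ => ?_, fun h2 => ?_, hmul, ?_⟩
  · rw [hmul, sum_Ttri_first_row_smul t z _ h2]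
  · rw [hmul, sum_Ttri_interior_row_smul t z _ hj₁ (by omega)]
  · rw [hmul, sum_Ttri_last_row_smul t z _ h2]
  · intro v hv
    refine (Submodule.span_le (p := (Submodule.span ℂ _).comap (Hop m t z).mulVecLin)).2 ?_ hv
    rintro _ ⟨j, rfl⟩
    rw [SetLike.mem_coe, Submodule.mem_comap, mulVecLin_apply, hmul]
    exact Submodule.sum_mem _ fun k _ => Submodule.smul_mem _ _ (Submodule.subset_span ⟨k, rfl⟩)
end

section
/- For all x ∈ ℂ, det(2x·1_n − H/t) = U_n(x) − ((z_m + z_{m̄})/t)·U_{n−m}(x)·U_{m−1}(x) + (z_m z_{m̄}/t²)·U_{n−2m}(x)·U_{m−1}(x)². -/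
open Matrix Complex Polynomial

/-- The uniform `n`-site open chain with hopping `t` and defect potentials
`zm` at site `m` and `zmb` at the mirror site `m̄ = n+1−m` (1-based sites). -/
noncomputable def Hu (n m : ℕ) (t : ℝ) (zm zmb : ℂ) : Matrix (Fin n) (Fin n) ℂ :=
  fun i j =>
    if (i : ℕ) = (j : ℕ) then
      (if (i : ℕ) + 1 = m then zm else if (i : ℕ) + 1 = n + 1 - m then zmb else 0)
    else if (i : ℕ) + 1 = (j : ℕ) ∨ (j : ℕ) + 1 = (i : ℕ) then (t : ℂ)
    else 0

/-!
`2x·1 − H/t` is tridiagonal with `−1` beside the diagonal and diagonal entries `2x`, except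
`2x − z_m/t` at site `m` and `2x − z_m̄/t` at site `m̄`. Its leading principal minors satisfy
`D (k + 2) = d (k + 1) · D (k + 1) − D k`, so for a constant diagonal `D k = U_k(x)`. If the diagonal
is `2x − c` at position `p` and `2x` after it, then for `k ≥ p`, `D k = D' k − c · D p · U_{k−p−1}(x)`,
where `D'` belongs to the diagonal with that defect removed: both sides solve the Chebyshev
recurrence from `p` on and agree at `p` (as `U_{−1} = 0`) and at `p + 1`. Removing the defect at `m̄`,
then the one at `m`, gives the formula.
-/

open Chebyshev

section Tridiag

variable {R : Type*} [CommRing R]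

def tridiag (d : ℕ → R) (k : ℕ) : Matrix (Fin k) (Fin k) R :=
  Matrix.of fun i j =>
    if (i : ℕ) = j then d i else if (i : ℕ) + 1 = j ∨ (j : ℕ) + 1 = i then -1 else 0

theorem tridiag_apply_of_add_one_lt (d : ℕ → R) {k : ℕ} {i j : Fin k}
    (h : (i : ℕ) + 1 < j ∨ (j : ℕ) + 1 < i) : tridiag d k i j = 0 := by
  simp only [tridiag, of_apply]
  rw [if_neg (by omega), if_neg (by omega)]

theorem tridiag_congr {d d' : ℕ → R} {k : ℕ} (h : ∀ i < k, d i = d' i) :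
    tridiag d k = tridiag d' k := by
  ext i j
  simp only [tridiag, of_apply, h i i.isLt]

theorem tridiag_submatrix_castSucc (d : ℕ → R) (k : ℕ) :
    (tridiag d (k + 1)).submatrix Fin.castSucc Fin.castSucc = tridiag d k := by
  ext i j
  simp [tridiag]

theorem det_tridiag_succ_succ (d : ℕ → R) (k : ℕ) :
    (tridiag d (k + 2)).det = d (k + 1) * (tridiag d (k + 1)).det - (tridiag d k).det := by
  have hminor : ((tridiag d (k + 2)).submatrix (Fin.last _).succAbove
      (Fin.last k).castSucc.succAbove).det = -(tridiag d k).det := by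
    rw [det_succ_column _ (Fin.last k), Fin.sum_univ_castSucc, Finset.sum_eq_zero, zero_add]
    · have : ((tridiag d (k + 2)).submatrix (Fin.last _).succAbove
          (Fin.last k).castSucc.succAbove).submatrix
          (Fin.last k).succAbove (Fin.last k).succAbove = tridiag d k := by
        ext i j
        simp [tridiag, Fin.succAbove_castSucc_of_lt _ _ (Fin.castSucc_lt_last j)]
      rw [this]
      simp [tridiag]
    · intro i _
      have h0 : tridiag d (k + 2) i.castSucc.castSucc (Fin.last _) = 0 :=
        tridiag_apply_of_add_one_lt d (by simp)
      simp [h0]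
  have hlast : tridiag d (k + 2) (Fin.last _) (Fin.last _) = d (k + 1) := by simp [tridiag]
  have hnext : tridiag d (k + 2) (Fin.last _) (Fin.last k).castSucc = -1 := by simp [tridiag]
  rw [det_succ_row _ (Fin.last _), Fin.sum_univ_castSucc, Fin.sum_univ_castSucc,
    Finset.sum_eq_zero, zero_add, hminor, hlast, hnext, Fin.succAbove_last,
    tridiag_submatrix_castSucc]
  · simp only [Fin.val_last, Fin.val_castSucc]
    rw [Odd.neg_one_pow ⟨k, by ring⟩, Even.neg_one_pow ⟨k + 1, rfl⟩]
    ring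
  · intro j _
    have h0 : tridiag d (k + 2) (Fin.last _) j.castSucc.castSucc = 0 :=
      tridiag_apply_of_add_one_lt d (by simp)
    simp [h0]

theorem det_tridiag_succ_sub_det_tridiag_succ {d d' : ℕ → R} {p : ℕ} (h : ∀ i < p, d i = d' i) :
    (tridiag d (p + 1)).det - (tridiag d' (p + 1)).det = (d p - d' p) * (tridiag d p).det := by
  cases p with
  | zero => simp [tridiag]
  | succ q =>
    rw [det_tridiag_succ_succ, det_tridiag_succ_succ, tridiag_congr h,
      tridiag_congr fun i hi => h i (by omega)]
    ring

theorem eval_U_add_two (x : R) (n : ℤ) :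
    (U R (n + 2)).eval x = 2 * x * (U R (n + 1)).eval x - (U R n).eval x := by
  simp [U_add_two]

theorem eq_of_chebyshev_recurrence (x : R) {f g : ℕ → R} {a : ℕ}
    (hf : ∀ k, a ≤ k → f (k + 2) = 2 * x * f (k + 1) - f k)
    (hg : ∀ k, a ≤ k → g (k + 2) = 2 * x * g (k + 1) - g k)
    (h₀ : f a = g a) (h₁ : f (a + 1) = g (a + 1)) : ∀ k, a ≤ k → f k = g k := by
  suffices ∀ j, f (a + j) = g (a + j) ∧ f (a + j + 1) = g (a + j + 1) by
    intro k hk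
    obtain ⟨j, rfl⟩ := Nat.exists_eq_add_of_le hk
    exact (this j).1
  intro j
  induction j with
  | zero => exact ⟨h₀, h₁⟩
  | succ j ih =>
    refine ⟨ih.2, ?_⟩
    rw [show a + (j + 1) + 1 = a + j + 2 by ring, hf _ (by omega), hg _ (by omega), ih.1, ih.2]

theorem det_tridiag_const (x : R) (k : ℕ) :
    (tridiag (fun _ => 2 * x) k).det = (U R k).eval x := by
  refine eq_of_chebyshev_recurrence x (f := fun k => (tridiag (fun _ => 2 * x) k).det)
    (g := fun k : ℕ => (U R k).eval x) (fun k _ => ?_) (fun k _ => ?_) ?_ ?_ k k.zero_le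
  · exact det_tridiag_succ_succ _ k
  · push_cast
    exact eval_U_add_two x k
  · simp
  · simp [tridiag]

theorem det_tridiag_eq_det_tridiag_update_sub (x : R) {d : ℕ → R} {p : ℕ}
    (hd : ∀ i, p < i → d i = 2 * x) {k : ℕ} (hk : p ≤ k) :
    (tridiag d k).det = (tridiag (Function.update d p (2 * x)) k).det
      - (2 * x - d p) * (tridiag d p).det * (U R ((k : ℤ) - p - 1)).eval x := by
  have hlow : ∀ i < p, d i = Function.update d p (2 * x) i :=
    fun i hi => (Function.update_of_ne hi.ne _ _).symm
  refine eq_of_chebyshev_recurrence x (f := fun k => (tridiag d k).det)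
    (g := fun k : ℕ => (tridiag (Function.update d p (2 * x)) k).det
      - (2 * x - d p) * (tridiag d p).det * (U R ((k : ℤ) - p - 1)).eval x)
    (fun k hk => ?_) (fun k hk => ?_) ?_ ?_ k hk
  · rw [det_tridiag_succ_succ, hd _ (by omega)]
  · rw [det_tridiag_succ_succ, Function.update_of_ne (by omega), hd _ (by omega)]
    have := eval_U_add_two x ((k : ℤ) - p - 1)
    push_cast
    rw [show (k : ℤ) + 2 - p - 1 = (k : ℤ) - p - 1 + 2 by ring,
      show (k : ℤ) + 1 - p - 1 = (k : ℤ) - p - 1 + 1 by ring, this]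
    ring
  · rw [show ((p : ℕ) : ℤ) - p - 1 = -1 by ring, U_neg_one, eval_zero, mul_zero, sub_zero,
      tridiag_congr hlow]
  · have := det_tridiag_succ_sub_det_tridiag_succ hlow
    rw [Function.update_self] at this
    rw [show ((p + 1 : ℕ) : ℤ) - p - 1 = 0 by push_cast; ring, U_zero, eval_one]
    linear_combination this

theorem det_tridiag_two_defects (x c₁ c₂ : R) {r s k : ℕ} (hrs : r < s) (hsk : s ≤ k) :
    (tridiag (fun i => if i = r then 2 * x - c₁ else if i = s then 2 * x - c₂ else 2 * x) k).det
      = (U R k).eval x - c₁ * (U R r).eval x * (U R ((k : ℤ) - r - 1)).eval x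
        - c₂ * (U R s).eval x * (U R ((k : ℤ) - s - 1)).eval x
        + c₁ * c₂ * (U R r).eval x * (U R ((s : ℤ) - r - 1)).eval x
          * (U R ((k : ℤ) - s - 1)).eval x := by
  set d := fun i => if i = r then 2 * x - c₁ else if i = s then 2 * x - c₂ else 2 * x
  set d₁ := Function.update d s (2 * x)
  have hd_tail : ∀ i, s < i → d i = 2 * x := by
    intro i hi
    simp only [d]
    split_ifs <;> first | rfl | omega
  have hd₁_tail : ∀ i, r < i → d₁ i = 2 * x := by
    intro i hi
    simp only [d₁, d, Function.update_apply]
    split_ifs <;> first | rfl | omega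
  have hd₁ : Function.update d₁ r (2 * x) = fun _ => 2 * x := by
    ext i
    simp only [d₁, d, Function.update_apply]
    split_ifs <;> rfl
  have hU : (tridiag d₁ r).det = (U R r).eval x := by
    rw [← det_tridiag_const, ← hd₁, tridiag_congr fun i hi => Function.update_of_ne hi.ne _ _]
  have hdr : d r = 2 * x - c₁ := if_pos rfl
  have hds : d s = 2 * x - c₂ := by simp [d, hrs.ne']
  rw [det_tridiag_eq_det_tridiag_update_sub x hd_tail hsk,
    det_tridiag_eq_det_tridiag_update_sub x hd₁_tail (hrs.le.trans hsk),
    tridiag_congr (fun i hi => (Function.update_of_ne hi.ne _ _).symm : ∀ i < s, d i = d₁ i),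
    det_tridiag_eq_det_tridiag_update_sub x hd₁_tail hrs.le, hd₁, det_tridiag_const,
    det_tridiag_const, hU]
  simp only [d₁, Function.update_of_ne hrs.ne, hdr, hds]
  ring

end Tridiag

theorem stmt11_general (n m : ℕ) (hm : 1 ≤ m) (hmn : 2*m ≤ n)
    (t : ℝ) (ht : 0 < t) (zm zmb : ℂ) :
    ∀ x : ℂ,
      Matrix.det ((2*x) • (1 : Matrix (Fin n) (Fin n) ℂ) - (t : ℂ)⁻¹ • Hu n m t zm zmb) =
        (Chebyshev.U ℂ (n : ℤ)).eval x
          - ((zm + zmb) / (t : ℂ)) * (Chebyshev.U ℂ ((n : ℤ) - (m : ℤ))).eval x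
              * (Chebyshev.U ℂ ((m : ℤ) - 1)).eval x
          + (zm * zmb / (t : ℂ)^2) * (Chebyshev.U ℂ ((n : ℤ) - 2*(m : ℤ))).eval x
              * ((Chebyshev.U ℂ ((m : ℤ) - 1)).eval x)^2 := by
  intro x
  have ht' : (t : ℂ) ≠ 0 := by exact_mod_cast ht.ne'
  have hH : (2 * x) • (1 : Matrix (Fin n) (Fin n) ℂ) - (t : ℂ)⁻¹ • Hu n m t zm zmb =
      tridiag (fun i => if i = m - 1 then 2 * x - zm / t
        else if i = n - m then 2 * x - zmb / t else 2 * x) n := by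
    ext i j
    simp only [Matrix.sub_apply, Matrix.smul_apply, one_apply, Hu, tridiag, of_apply, Fin.ext_iff,
      smul_eq_mul]
    split_ifs <;> first | omega | (field_simp <;> ring)
  have hr : ((m - 1 : ℕ) : ℤ) = m - 1 := by omega
  have hs : ((n - m : ℕ) : ℤ) = n - m := by omega
  rw [hH, det_tridiag_two_defects x _ _ (by omega : m - 1 < n - m) (Nat.sub_le n m), hr, hs,
    show (n : ℤ) - (m - 1) - 1 = n - m by ring, show (n : ℤ) - (n - m) - 1 = m - 1 by ring,
    show (n : ℤ) - m - (m - 1) - 1 = n - 2 * m by ring]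
  ring

theorem stmt11 (n m : ℕ) (hn : 2 ≤ n) (hm : 1 ≤ m) (hmn : 2*m ≤ n)
    (t : ℝ) (ht : 0 < t) (zm zmb : ℂ) :
    ∀ x : ℂ,
      Matrix.det ((2*x) • (1 : Matrix (Fin n) (Fin n) ℂ) - (t : ℂ)⁻¹ • Hu n m t zm zmb) =
        (Chebyshev.U ℂ (n : ℤ)).eval x
          - ((zm + zmb) / (t : ℂ)) * (Chebyshev.U ℂ ((n : ℤ) - (m : ℤ))).eval x
              * (Chebyshev.U ℂ ((m : ℤ) - 1)).eval x
          + (zm * zmb / (t : ℂ)^2) * (Chebyshev.U ℂ ((n : ℤ) - 2*(m : ℤ))).eval x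
              * ((Chebyshev.U ℂ ((m : ℤ) - 1)).eval x)^2 :=
  stmt11_general n m hm hmn t ht zm zmb
end
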